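/- arXiv:2007.08355 — 3 statements merged into one kernel-verified Lean document; each statement's English description precedes it below -/
import Mathlib

section
/- Discrete Poincaré–Wirtinger inequality: for any sequence (f_k)_{k=0}^{K} of real numbers and any index l with 0 ≤ l ≤ K, one has |f_l - (1/L) Σ''_{k=0}^{K} f_k Δx|^2 ≤ L Σ_{k=0}^{K-1} |δ_k^+ f_k|^2 Δx, where L = K Δx. -/
/-!
Writing `δf_k = f_{k+1} - f_k`, the trapezoidal mean of `f` is the plain mean of the `K` midpoint
values `(f_k + f_{k+1}) / 2`. Each of these lies within `S = ∑ |δf_k|` of `f_l` by telescoping,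
hence so does their mean, and Cauchy–Schwarz gives `S² ≤ K ∑ |δf_k|²`; rescaling by `Δx`
turns this into the stated inequality.
-/

open Finset

theorem dist_le_sum_dist_succ {α : Type*} [PseudoMetricSpace α] (f : ℕ → α) {K a b : ℕ}
    (ha : a ≤ K) (hb : b ≤ K) : dist (f a) (f b) ≤ ∑ j ∈ range K, dist (f j) (f (j + 1)) := by
  wlog hab : a ≤ b generalizing a b
  · rw [dist_comm]
    exact this hb ha (le_of_not_ge hab)
  calc dist (f a) (f b) ≤ ∑ j ∈ Ico a b, dist (f j) (f (j + 1)) := dist_le_Ico_sum_dist f hab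
    _ ≤ ∑ j ∈ range K, dist (f j) (f (j + 1)) := by
      refine sum_le_sum_of_subset_of_nonneg (fun j hj => ?_) fun _ _ _ => dist_nonneg
      simp only [mem_Ico, mem_range] at hj ⊢
      omega

theorem abs_sub_sum_div_card_le {ι : Type*} {s : Finset ι} (hs : s.Nonempty) {g : ι → ℝ}
    {c S : ℝ} (h : ∀ i ∈ s, |c - g i| ≤ S) : |c - (∑ i ∈ s, g i) / #s| ≤ S := by
  have hcard : (0 : ℝ) < #s := by exact_mod_cast hs.card_pos
  have hsub : c - (∑ i ∈ s, g i) / #s = (∑ i ∈ s, (c - g i)) / #s := by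
    rw [sum_sub_distrib, sum_const, nsmul_eq_mul]
    field_simp
  rw [hsub, abs_div, abs_of_pos hcard, div_le_iff₀ hcard]
  calc |∑ i ∈ s, (c - g i)| ≤ ∑ i ∈ s, |c - g i| := abs_sum_le_sum_abs _ _
    _ ≤ S * #s := by simpa [mul_comm] using sum_le_card_nsmul s _ S h

theorem trapezoid_sum_eq_sum_midpoints {K : ℕ} (hK : 1 ≤ K) (f : ℕ → ℝ) :
    (1/2) * f 0 + ∑ k ∈ Ioo 0 K, f k + (1/2) * f K = ∑ k ∈ range K, (f k + f (k + 1)) / 2 := by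
  obtain ⟨n, rfl⟩ := Nat.exists_eq_add_of_le' hK
  have hinner : ∑ k ∈ Ioo 0 (n + 1), f k = ∑ k ∈ range n, f (k + 1) := by
    rw [← Ico_add_one_left_eq_Ioo, sum_Ico_eq_sum_range]
    simp only [zero_add, Nat.add_sub_cancel, add_comm 1]
  rw [hinner, ← sum_div, sum_add_distrib, sum_range_succ', sum_range_succ (fun k => f (k + 1))]
  ring

theorem sq_abs_sub_mean_midpoints_le {K : ℕ} (hK : 1 ≤ K) (f : ℕ → ℝ) {l : ℕ} (hl : l ≤ K) :
    |f l - (∑ k ∈ range K, (f k + f (k + 1)) / 2) / K| ^ 2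
      ≤ K * ∑ k ∈ range K, |f (k + 1) - f k| ^ 2 := by
  set S := ∑ k ∈ range K, |f (k + 1) - f k|
  have hdist : ∀ k ≤ K, |f l - f k| ≤ S := fun k hk => by
    simpa only [Real.dist_eq, abs_sub_comm (f _) (f (_ + 1))] using dist_le_sum_dist_succ f hl hk
  have hmid : ∀ k ∈ range K, |f l - (f k + f (k + 1)) / 2| ≤ S := fun k hk => by
    have hk := mem_range.mp hk
    have h₀ := abs_le.mp (hdist k hk.le)
    have h₁ := abs_le.mp (hdist (k + 1) hk)
    exact abs_le.mpr ⟨by linarith [h₀.1, h₁.1], by linarith [h₀.2, h₁.2]⟩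
  have hmean := abs_sub_sum_div_card_le (nonempty_range_iff.mpr (by omega)) hmid
  rw [card_range] at hmean
  calc |f l - (∑ k ∈ range K, (f k + f (k + 1)) / 2) / K| ^ 2 ≤ S ^ 2 :=
        pow_le_pow_left₀ (abs_nonneg _) hmean 2
    _ ≤ K * ∑ k ∈ range K, |f (k + 1) - f k| ^ 2 := by
        simpa using sq_sum_le_card_mul_sum_sq (s := range K) (f := fun k => |f (k + 1) - f k|)

/-- Discrete Poincaré–Wirtinger inequality. -/
theorem discrete_poincare_wirtinger (K : ℕ) (hK : 1 ≤ K) (Δx : ℝ) (hΔx : 0 < Δx)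
    (L : ℝ) (hL : L = K * Δx) (f : ℕ → ℝ) (l : ℕ) (hl : l ≤ K) :
    |f l - (1/L) * (((1/2) * f 0 + (∑ k ∈ Finset.Ioo 0 K, f k) + (1/2) * f K) * Δx)| ^ 2
      ≤ L * ∑ k ∈ Finset.range K, |(f (k + 1) - f k) / Δx| ^ 2 * Δx := by
  have hmean : (1/L) * (((1/2) * f 0 + (∑ k ∈ Ioo 0 K, f k) + (1/2) * f K) * Δx)
      = (∑ k ∈ range K, (f k + f (k + 1)) / 2) / K := by
    rw [trapezoid_sum_eq_sum_midpoints hK, hL]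
    field_simp
  have hscale : L * ∑ k ∈ range K, |(f (k + 1) - f k) / Δx| ^ 2 * Δx
      = K * ∑ k ∈ range K, |f (k + 1) - f k| ^ 2 := by
    rw [mul_sum, mul_sum, hL]
    refine sum_congr rfl fun k _ => ?_
    rw [abs_div, abs_of_pos hΔx]
    field_simp
  rw [hmean, hscale]
  exact sq_abs_sub_mean_midpoints_le hK f hl
end

section
/- For F ∈ C^2(ℝ) and any ξ, ξ̃, η, η̃ ∈ ℝ, the identity dF/d(ξ,η) - dF/d(ξ̃,η̃) = (1/2)·F̄''(ξ, ξ̃; η, η̃)·(ξ - ξ̃) + (1/2)·F̄''(η, η̃; ξ, ξ̃)·(η - η̃) holds. -/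
/-- The difference quotient dF/d(ξ,η). -/
noncomputable def dq (F : ℝ → ℝ) (ξ η : ℝ) : ℝ :=
  if ξ = η then deriv F η else (F ξ - F η) / (ξ - η)

/-- The second-order difference quotient F̄''(ξ, ξ̃; η, η̃). -/
noncomputable def Fbar (F : ℝ → ℝ) (ξ ξ' η η' : ℝ) : ℝ :=
  if ξ = ξ' then deriv (fun x => dq F x η + dq F x η') ξ'
  else (1 / (ξ - ξ')) * ((dq F ξ η + dq F ξ η') - (dq F ξ' η + dq F ξ' η'))

/-!
Multiplying `Fbar F ξ ξ' η η'` by `ξ - ξ'` undoes the division, and in the diagonal case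
`ξ = ξ'` both sides vanish whatever the derivative is; so the right-hand side is
`½ (dq ξ η + dq ξ η' - dq ξ' η - dq ξ' η') + ½ (dq η ξ + dq η ξ' - dq η' ξ - dq η' ξ')`.
By the symmetry of `dq` the mixed terms `dq ξ η'` and `dq ξ' η` cancel, leaving
`dq ξ η - dq ξ' η'`.
-/

theorem dq_comm (F : ℝ → ℝ) (a b : ℝ) : dq F a b = dq F b a := by
  unfold dq
  by_cases h : a = b
  · subst h; rfl
  · rw [if_neg h, if_neg (Ne.symm h), ← neg_sub b a, ← neg_sub (F b), neg_div_neg_eq]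

theorem Fbar_mul_sub (F : ℝ → ℝ) (ξ ξ' η η' : ℝ) :
    Fbar F ξ ξ' η η' * (ξ - ξ') = (dq F ξ η + dq F ξ η') - (dq F ξ' η + dq F ξ' η') := by
  unfold Fbar
  by_cases h : ξ = ξ'
  · subst h; simp
  · rw [if_neg h]
    field_simp

theorem dq_sub_dq_general (F : ℝ → ℝ) (ξ ξ' η η' : ℝ) :
    dq F ξ η - dq F ξ' η' =
      (1/2) * Fbar F ξ ξ' η η' * (ξ - ξ') + (1/2) * Fbar F η η' ξ ξ' * (η - η') := by
  have hξ := Fbar_mul_sub F ξ ξ' η η'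
  have hη := Fbar_mul_sub F η η' ξ ξ'
  rw [dq_comm F η ξ, dq_comm F η ξ', dq_comm F η' ξ, dq_comm F η' ξ'] at hη
  linarith

/-- Decomposition of a difference of difference quotients via F̄''. -/
theorem dq_sub_dq (F : ℝ → ℝ) (hF : ContDiff ℝ 2 F) (ξ ξ' η η' : ℝ) :
    dq F ξ η - dq F ξ' η' =
      (1/2) * Fbar F ξ ξ' η η' * (ξ - ξ') + (1/2) * Fbar F η η' ξ ξ' * (η - η') :=
  dq_sub_dq_general F ξ ξ' η η'
end

section
/- Discrete energy dissipation: any solution (U^{(n)}, P^{(n)}) of the structure-preserving finite difference scheme for the Cahn–Hilliard equation with dynamic boundary condition satisfies (J_d(U^{(n+1)}) - J_d(U^{(n)}))/Δt = -γ|δ_n^+ U_0^{(n)}|^2 - γ|δ_n^+ U_K^{(n)}|^2 - Σ_{k=0}^{K-1}|δ_k^+ P_k^{(n)}|^2 Δx ≤ 0 for all n. -/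
/-- The discrete energy J_d. -/
noncomputable def Jd (K : ℕ) (Δx γ : ℝ) (F : ℝ → ℝ) (U : ℤ → ℝ) : ℝ :=
  (∑ k ∈ Finset.range K, (γ / 2) * (((U ((k : ℤ) + 1) - U k) / Δx) ^ 2) * Δx) +
    ((1/2) * F (U 0) + (∑ k ∈ Finset.Ioo 0 K, F (U (k : ℤ))) + (1/2) * F (U (K : ℤ))) * Δx

/-!
The discrete analogue of the continuous energy argument. Since `F V - F U = dF/d(V,U) · (V - U)`
exactly, the time difference of `J_d` is `γ Σ δ⁺(δₙ⁺U) δ⁺Ū Δx + Σ'' δₙ⁺U · dF/d Δx` with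
`Ū = (U^{(n+1)} + U^{(n)})/2`. Summation by parts turns the first sum into
`-γ Σ'' δₙ⁺U δ^⟨2⟩Ū Δx` plus boundary terms `γ δₙ⁺U δ^⟨1⟩Ū`, which the dynamic boundary
conditions make `-γ|δₙ⁺U₀|² - γ|δₙ⁺U_K|²`. By the scheme the remaining interior sum is
`Σ'' P δ^⟨2⟩P Δx`, and summing by parts once more, with boundary terms killed by the Neumann
condition, gives `-Σ |δ⁺P|² Δx`.
-/

namespace FiniteDiff

noncomputable def forward (Δx : ℝ) (f : ℤ → ℝ) (k : ℤ) : ℝ := (f (k + 1) - f k) / Δx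

noncomputable def central (Δx : ℝ) (f : ℤ → ℝ) (k : ℤ) : ℝ := (f (k + 1) - f (k - 1)) / (2 * Δx)

noncomputable def second (Δx : ℝ) (f : ℤ → ℝ) (k : ℤ) : ℝ := (f (k + 1) - 2 * f k + f (k - 1)) / Δx ^ 2

/-- The trapezoidal sum `Σ''_{k=0}^{K} g k`, without the factor `Δx`. -/
noncomputable def trapezoidSum (K : ℕ) (g : ℤ → ℝ) : ℝ :=
  (1/2) * g 0 + (∑ k ∈ Finset.Ioo 0 K, g (k : ℤ)) + (1/2) * g (K : ℤ)

theorem trapezoidSum_one (g : ℤ → ℝ) : trapezoidSum 1 g = (g 0 + g 1) / 2 := by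
  rw [trapezoidSum, show Finset.Ioo 0 1 = ∅ from rfl, Finset.sum_empty, Nat.cast_one]; ring

theorem trapezoidSum_succ {K : ℕ} (hK : 1 ≤ K) (g : ℤ → ℝ) :
    trapezoidSum (K + 1) g = trapezoidSum K g + (g K + g (K + 1)) / 2 := by
  have hIoo : Finset.Ioo 0 (K + 1) = insert K (Finset.Ioo 0 K) := by
    ext m; simp only [Finset.mem_Ioo, Finset.mem_insert]; omega
  simp only [trapezoidSum, hIoo, Finset.sum_insert Finset.right_notMem_Ioo]
  push_cast; ring

theorem trapezoidSum_congr {K : ℕ} {g h : ℤ → ℝ} (hgh : ∀ k : ℤ, 0 ≤ k → k ≤ K → g k = h k) :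
    trapezoidSum K g = trapezoidSum K h := by
  have hK := Int.natCast_nonneg K
  unfold trapezoidSum
  rw [hgh 0 le_rfl hK, hgh K hK le_rfl,
    Finset.sum_congr rfl fun (k : ℕ) hk => hgh k (Int.natCast_nonneg k)
      (by exact_mod_cast (Finset.mem_Ioo.mp hk).2.le)]

theorem trapezoidSum_add_const_mul (K : ℕ) (c : ℝ) (g h : ℤ → ℝ) :
    trapezoidSum K (fun k => g k + c * h k) = trapezoidSum K g + c * trapezoidSum K h := by
  simp only [trapezoidSum, Finset.sum_add_distrib, ← Finset.mul_sum]; ring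

theorem sum_forward_mul_forward {K : ℕ} (hK : 1 ≤ K) {Δx : ℝ} (hΔx : Δx ≠ 0) (f g : ℤ → ℝ) :
    ∑ k ∈ Finset.range K, forward Δx f k * forward Δx g k * Δx =
      f K * central Δx g K - f 0 * central Δx g 0 -
        trapezoidSum K (fun k => f k * second Δx g k) * Δx := by
  induction K, hK using Nat.le_induction with
  | base =>
    simp only [Finset.sum_range_one, trapezoidSum_one, forward, central, second]
    field_simp; push_cast; ring
  | succ K hK ih =>
    rw [Finset.sum_range_succ, ih, trapezoidSum_succ hK]
    generalize trapezoidSum K _ = T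
    simp only [forward, central, second]
    field_simp; push_cast; simp only [add_sub_cancel_right]; ring

end FiniteDiff

open FiniteDiff

theorem sub_eq_dq_mul_sub (F : ℝ → ℝ) (x y : ℝ) : F x - F y = dq F x y * (x - y) := by
  unfold dq
  rcases eq_or_ne x y with h | h
  · simp [h]
  · rw [if_neg h, div_mul_cancel₀ _ (sub_ne_zero_of_ne h)]

theorem Jd_sub_div (K : ℕ) (Δx Δt γ : ℝ) (F : ℝ → ℝ) (V U : ℤ → ℝ) :
    (Jd K Δx γ F V - Jd K Δx γ F U) / Δt =
      γ * ∑ k ∈ Finset.range K,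
          forward Δx (fun j => (V j - U j) / Δt) k * forward Δx (fun j => (V j + U j) / 2) k * Δx +
        trapezoidSum K (fun k => (V k - U k) / Δt * dq F (V k) (U k)) * Δx := by
  calc (Jd K Δx γ F V - Jd K Δx γ F U) / Δt
      = ∑ k ∈ Finset.range K, (γ / 2 * forward Δx V k ^ 2 * Δx - γ / 2 * forward Δx U k ^ 2 * Δx) / Δt
          + trapezoidSum K (fun k => (F (V k) - F (U k)) / Δt) * Δx := by
        simp only [Jd, trapezoidSum, forward]
        rw [← Finset.sum_div, Finset.sum_sub_distrib, ← Finset.sum_div, Finset.sum_sub_distrib]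
        ring
    _ = _ := by
        congr 1
        · rw [Finset.mul_sum]
          refine Finset.sum_congr rfl fun k _ => ?_
          simp only [forward]
          ring
        · congr 2
          funext k
          rw [sub_eq_dq_mul_sub]
          ring

theorem Jd_sub_div_eq_of_scheme {K : ℕ} (hK : 1 ≤ K) {Δx : ℝ} (hΔx : Δx ≠ 0) (Δt γ : ℝ)
    (F : ℝ → ℝ) (V U p : ℤ → ℝ)
    (scheme1 : ∀ k : ℤ, 0 ≤ k → k ≤ K → (V k - U k) / Δt = second Δx p k)
    (scheme2 : ∀ k : ℤ, 0 ≤ k → k ≤ K →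
      p k = -γ * second Δx (fun j => (V j + U j) / 2) k + dq F (V k) (U k))
    (dbc0 : (V 0 - U 0) / Δt = central Δx (fun j => (V j + U j) / 2) 0)
    (dbcK : (V K - U K) / Δt = -central Δx (fun j => (V j + U j) / 2) K)
    (nbc0 : central Δx p 0 = 0) (nbcK : central Δx p K = 0) :
    (Jd K Δx γ F V - Jd K Δx γ F U) / Δt =
      -γ * ((V 0 - U 0) / Δt) ^ 2 - γ * ((V K - U K) / Δt) ^ 2 -
        ∑ k ∈ Finset.range K, forward Δx p k ^ 2 * Δx := by
  set d : ℤ → ℝ := fun j => (V j - U j) / Δt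
  set w : ℤ → ℝ := fun j => (V j + U j) / 2
  have hdq : trapezoidSum K (fun k => d k * dq F (V k) (U k)) =
      trapezoidSum K (fun k => d k * p k) + γ * trapezoidSum K (fun k => d k * second Δx w k) := by
    rw [← trapezoidSum_add_const_mul]
    exact trapezoidSum_congr fun k h0 hk => by rw [scheme2 k h0 hk]; ring
  have hdp : trapezoidSum K (fun k => d k * p k) = trapezoidSum K (fun k => p k * second Δx p k) :=
    trapezoidSum_congr fun k h0 hk => by rw [← scheme1 k h0 hk]; exact mul_comm _ _
  have hpp := sum_forward_mul_forward hK hΔx p p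
  have hsq : ∑ k ∈ Finset.range K, forward Δx p k ^ 2 * Δx =
      ∑ k ∈ Finset.range K, forward Δx p k * forward Δx p k * Δx := by simp only [sq]
  rw [Jd_sub_div, sum_forward_mul_forward hK hΔx, hdq, hdp, hsq]
  linear_combination (γ * d K) * dbcK + (γ * d 0) * dbc0 + hpp + p K * nbcK - p 0 * nbc0

theorem discrete_energy_dissipation_general (K : ℕ) (hK : 1 ≤ K) (Δx Δt γ : ℝ)
    (hΔx : 0 < Δx) (hγ : 0 < γ) (F : ℝ → ℝ)
    (U P : ℕ → ℤ → ℝ)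
    (scheme1 : ∀ n : ℕ, ∀ k : ℤ, 0 ≤ k → k ≤ K →
      (U (n + 1) k - U n k) / Δt = (P n (k + 1) - 2 * P n k + P n (k - 1)) / Δx ^ 2)
    (scheme2 : ∀ n : ℕ, ∀ k : ℤ, 0 ≤ k → k ≤ K →
      P n k = -γ * (((U (n + 1) (k + 1) + U n (k + 1)) / 2 -
          2 * ((U (n + 1) k + U n k) / 2) + (U (n + 1) (k - 1) + U n (k - 1)) / 2) / Δx ^ 2)
        + dq F (U (n + 1) k) (U n k))
    (dbc0 : ∀ n : ℕ, (U (n + 1) 0 - U n 0) / Δt =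
      ((U (n + 1) 1 + U n 1) / 2 - (U (n + 1) (-1) + U n (-1)) / 2) / (2 * Δx))
    (dbcK : ∀ n : ℕ, (U (n + 1) (K : ℤ) - U n (K : ℤ)) / Δt =
      -(((U (n + 1) ((K : ℤ) + 1) + U n ((K : ℤ) + 1)) / 2 -
          (U (n + 1) ((K : ℤ) - 1) + U n ((K : ℤ) - 1)) / 2) / (2 * Δx)))
    (nbc : ∀ n : ℕ, ∀ k : ℤ, k = 0 ∨ k = (K : ℤ) →
      (P n (k + 1) - P n (k - 1)) / (2 * Δx) = 0) :
    ∀ n : ℕ,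
      (Jd K Δx γ F (U (n + 1)) - Jd K Δx γ F (U n)) / Δt =
          -γ * |(U (n + 1) 0 - U n 0) / Δt| ^ 2
            - γ * |(U (n + 1) (K : ℤ) - U n (K : ℤ)) / Δt| ^ 2
            - ∑ k ∈ Finset.range K, |(P n ((k : ℤ) + 1) - P n k) / Δx| ^ 2 * Δx ∧
        (Jd K Δx γ F (U (n + 1)) - Jd K Δx γ F (U n)) / Δt ≤ 0 := by
  intro n
  have h := Jd_sub_div_eq_of_scheme hK hΔx.ne' Δt γ F (U (n + 1)) (U n) (P n)
    (scheme1 n) (scheme2 n) (dbc0 n) (dbcK n) (nbc n 0 (.inl rfl)) (nbc n K (.inr rfl))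
  refine ⟨by simpa only [sq_abs, forward] using h, ?_⟩
  have hsum : 0 ≤ ∑ k ∈ Finset.range K, forward Δx (P n) k ^ 2 * Δx :=
    Finset.sum_nonneg fun k _ => by positivity
  rw [h]
  nlinarith [sq_nonneg ((U (n + 1) 0 - U n 0) / Δt), sq_nonneg ((U (n + 1) K - U n K) / Δt)]

/-- Discrete energy dissipation of the structure-preserving scheme for the
Cahn–Hilliard equation with dynamic boundary condition. -/
theorem discrete_energy_dissipation (K : ℕ) (hK : 1 ≤ K) (Δx Δt γ : ℝ)
    (hΔx : 0 < Δx) (hΔt : 0 < Δt) (hγ : 0 < γ) (F : ℝ → ℝ) (hF : ContDiff ℝ 1 F)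
    (U P : ℕ → ℤ → ℝ)
    (scheme1 : ∀ n : ℕ, ∀ k : ℤ, 0 ≤ k → k ≤ K →
      (U (n + 1) k - U n k) / Δt = (P n (k + 1) - 2 * P n k + P n (k - 1)) / Δx ^ 2)
    (scheme2 : ∀ n : ℕ, ∀ k : ℤ, 0 ≤ k → k ≤ K →
      P n k = -γ * (((U (n + 1) (k + 1) + U n (k + 1)) / 2 -
          2 * ((U (n + 1) k + U n k) / 2) + (U (n + 1) (k - 1) + U n (k - 1)) / 2) / Δx ^ 2)
        + dq F (U (n + 1) k) (U n k))
    (dbc0 : ∀ n : ℕ, (U (n + 1) 0 - U n 0) / Δt =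
      ((U (n + 1) 1 + U n 1) / 2 - (U (n + 1) (-1) + U n (-1)) / 2) / (2 * Δx))
    (dbcK : ∀ n : ℕ, (U (n + 1) (K : ℤ) - U n (K : ℤ)) / Δt =
      -(((U (n + 1) ((K : ℤ) + 1) + U n ((K : ℤ) + 1)) / 2 -
          (U (n + 1) ((K : ℤ) - 1) + U n ((K : ℤ) - 1)) / 2) / (2 * Δx)))
    (nbc : ∀ n : ℕ, ∀ k : ℤ, k = 0 ∨ k = (K : ℤ) →
      (P n (k + 1) - P n (k - 1)) / (2 * Δx) = 0) :
    ∀ n : ℕ,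
      (Jd K Δx γ F (U (n + 1)) - Jd K Δx γ F (U n)) / Δt =
          -γ * |(U (n + 1) 0 - U n 0) / Δt| ^ 2
            - γ * |(U (n + 1) (K : ℤ) - U n (K : ℤ)) / Δt| ^ 2
            - ∑ k ∈ Finset.range K, |(P n ((k : ℤ) + 1) - P n k) / Δx| ^ 2 * Δx ∧
        (Jd K Δx γ F (U (n + 1)) - Jd K Δx γ F (U n)) / Δt ≤ 0 :=
  discrete_energy_dissipation_general K hK Δx Δt γ hΔx hγ F U P scheme1 scheme2 dbc0 dbcK nbc
end
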